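/- Equivalence of the relative potential energy with the quadratic distance: Let a > 0, γ > 1, and define P(s) = as^γ and G(ρ) = ρ∫_{ρ̄}^{ρ} (P(s)−P(ρ̄))/s² ds for ρ, ρ̄ > 0. Then there exist constants c, C > 0 depending only on a and γ such that for every ρ̄ > 0 and every ρ ∈ [ρ̄/2, 3ρ̄/2], one has c ρ̄^{γ−2}(ρ−ρ̄)² ≤ G(ρ) ≤ C ρ̄^{γ−2}(ρ−ρ̄)². -/

import Mathlib

noncomputable section
open MeasureTheory Real Filter
open scoped ENNReal

/-- Three-dimensional Euclidean space. -/
abbrev E3 : Type := EuclideanSpace ℝ (Fin 3)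

namespace LC

/-- `i`-th partial derivative of a scalar field. -/
def pdS (i : Fin 3) (f : E3 → ℝ) (x : E3) : ℝ := fderiv ℝ f x (EuclideanSpace.single i 1)

/-- `i`-th partial derivative of a vector field. -/
def pdV (i : Fin 3) (f : E3 → E3) (x : E3) : E3 := fderiv ℝ f x (EuclideanSpace.single i 1)

/-- divergence of a vector field. -/
def div3 (u : E3 → E3) (x : E3) : ℝ := ∑ i, pdV i u x i

/-- componentwise Laplacian of a vector field. -/
def lapV (d : E3 → E3) (x : E3) : E3 := ∑ i, pdV i (pdV i d) x

/-- `|∇d|² = ∑_{i,j} (∂_i d^j)²`. -/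
def gradSq (d : E3 → E3) (x : E3) : ℝ := ∑ i, ‖pdV i d x‖ ^ 2

/-- deformation tensor `𝒟u = (∇u + (∇u)ᵀ)/2`. -/
def Dten (u : E3 → E3) (i j : Fin 3) (x : E3) : ℝ := (pdV i u x j + pdV j u x i) / 2

/-- Ericksen stress tensor `∇d⊙∇d − (1/2)|∇d|² I₃`. -/
def ericksen (d : E3 → E3) (i j : Fin 3) (x : E3) : ℝ :=
  (inner ℝ (pdV i d x) (pdV j d x) : ℝ) - (1 / 2) * gradSq d x * (if i = j then (1:ℝ) else 0)

/-- pointwise (Frobenius) norm of the first gradient of a vector field. -/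
def nrm1 (f : E3 → E3) (x : E3) : ℝ := Real.sqrt (∑ i, ‖pdV i f x‖ ^ 2)

/-- pointwise norm of the second gradient of a vector field. -/
def nrm2 (f : E3 → E3) (x : E3) : ℝ := Real.sqrt (∑ i, ∑ j, ‖pdV j (pdV i f) x‖ ^ 2)

/-- pointwise norm of the third gradient of a vector field. -/
def nrm3 (f : E3 → E3) (x : E3) : ℝ :=
  Real.sqrt (∑ i, ∑ j, ∑ k, ‖pdV k (pdV j (pdV i f)) x‖ ^ 2)

/-- pointwise norm of the gradient of a scalar field. -/
def snrm1 (f : E3 → ℝ) (x : E3) : ℝ := Real.sqrt (∑ i, (pdS i f x) ^ 2)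

/-- pointwise (Frobenius) norm of the deformation tensor. -/
def Dnrm (u : E3 → E3) (x : E3) : ℝ := Real.sqrt (∑ i, ∑ j, (Dten u i j x) ^ 2)

/-- real-valued `L^p` norm of a scalar field on `ℝ³`. -/
def lpR (p : ℝ≥0∞) (f : E3 → ℝ) : ℝ := (eLpNorm f p volume).toReal

/-- real-valued `L^p` norm of a vector field on `ℝ³`. -/
def lpV (p : ℝ≥0∞) (f : E3 → E3) : ℝ := (eLpNorm f p volume).toReal

/-- time derivative of a time-dependent vector field. -/
def ut (u : ℝ → E3 → E3) (t : ℝ) (x : E3) : E3 := deriv (fun τ => u τ x) t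

/-- time derivative of a time-dependent scalar field. -/
def rhot (ρ : ℝ → E3 → ℝ) (t : ℝ) (x : E3) : ℝ := deriv (fun τ => ρ τ x) t

/-- the potential energy `G(ρ) = ρ ∫_{ρ̄}^{ρ} (P(s) − P(ρ̄))/s² ds` for `P(s) = a s^γ`. -/
def Gfun (a γ ρbar r : ℝ) : ℝ := r * ∫ s in ρbar..r, (a * s ^ γ - a * ρbar ^ γ) / s ^ 2

/-- supremum over the time interval `[0,T]`. -/
def timeSup (T : ℝ) (f : ℝ → ℝ) : ℝ := sSup (f '' Set.Icc 0 T)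

/-- `E_d(T) = sup_{[0,T]} ‖∇d‖_{L³}`. -/
def Ed (T : ℝ) (d : ℝ → E3 → E3) : ℝ := timeSup T fun t => lpR 3 (nrm1 (d t))

/-- `E_{ρ,1}(T) = sup_{[0,T]} ‖ρ − ρ̄‖_{L^∞}`. -/
def Erho1 (T ρbar : ℝ) (ρ : ℝ → E3 → ℝ) : ℝ := timeSup T fun t => lpR ⊤ fun x => ρ t x - ρbar

/-- `sup_{[0,T]} ‖∇ρ‖_{L^p}² + ρ̄^{γ−α} ∫₀ᵀ ‖∇ρ‖_{L^p}² dt`. -/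
def ErhoP (p : ℝ≥0∞) (T γ α ρbar : ℝ) (ρ : ℝ → E3 → ℝ) : ℝ :=
  timeSup T (fun t => (lpR p (snrm1 (ρ t))) ^ 2) +
    ρbar ^ (γ - α) * ∫ t in (0:ℝ)..T, (lpR p (snrm1 (ρ t))) ^ 2

/-- `E_{u,1}(T)`. -/
def Eu1 (T μ₁ α ρbar : ℝ) (ρ : ℝ → E3 → ℝ) (u : ℝ → E3 → E3) : ℝ :=
  μ₁ * ρbar ^ α / (2:ℝ) ^ (α + 1) * timeSup T (fun t => (lpR 2 (nrm1 (u t))) ^ 2) +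
    (1 / 2) * ∫ t in (0:ℝ)..T, (lpV 2 fun x => Real.sqrt (ρ t x) • ut u t x) ^ 2

/-- `E_{u,2}(T)`. -/
def Eu2 (T μ₁ α ρbar : ℝ) (ρ : ℝ → E3 → ℝ) (u : ℝ → E3 → E3) : ℝ :=
  timeSup T (fun t => (lpV 2 fun x => Real.sqrt (ρ t x) • ut u t x) ^ 2) +
    μ₁ * ρbar ^ α / (2:ℝ) ^ (α + 1) * ∫ t in (0:ℝ)..T, (lpR 2 (nrm1 (ut u t))) ^ 2

/-- the constant `N₃ = 2μ₁‖𝒟u₀‖_{L²}² + μ₂‖div u₀‖_{L²}²`. -/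
def N3 (μ₁ μ₂ : ℝ) (u₀ : E3 → E3) : ℝ :=
  2 * μ₁ * (lpR 2 (Dnrm u₀)) ^ 2 + μ₂ * (lpR 2 (div3 u₀)) ^ 2

/-- The simplified Ericksen–Leslie system for compressible liquid crystal flows on `ℝ³`,
together with the constraint `|d| = 1` and the far-field conditions, holding at all
times in the set `s`. -/
structure IsSol (a γ μ₁ μ₂ ν lam α ρbar : ℝ) (e : E3)
    (ρ : ℝ → E3 → ℝ) (u d : ℝ → E3 → E3) (s : Set ℝ) : Prop where
  mass : ∀ t ∈ s, ∀ x : E3,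
    rhot ρ t x + (fderiv ℝ (ρ t) x (u t x) + ρ t x * div3 (u t) x) = 0
  momentum : ∀ t ∈ s, ∀ x : E3, ∀ j : Fin 3,
    deriv (fun τ => ρ τ x * u τ x j) t
      + (∑ i, pdS i (fun y => ρ t y * u t y i * u t y j) x)
      + pdS j (fun y => a * ρ t y ^ γ) x
      - ∑ i, pdS i (fun y => 2 * μ₁ * ρ t y ^ α * Dten (u t) i j y
          + μ₂ * ρ t y ^ α * div3 (u t) y * (if i = j then (1:ℝ) else 0)) x
    = -ν * ∑ i, pdS i (fun y => ericksen (d t) i j y) x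
  director : ∀ t ∈ s, ∀ x : E3,
    ut d t x + fderiv ℝ (d t) x (u t x)
      = lam • (lapV (d t) x + gradSq (d t) x • d t x)
  unit : ∀ t ∈ s, ∀ x : E3, ‖d t x‖ = 1
  farRho : ∀ t ∈ s, Tendsto (ρ t) (cocompact E3) (nhds ρbar)
  farU : ∀ t ∈ s, Tendsto (u t) (cocompact E3) (nhds 0)
  farD : ∀ t ∈ s, Tendsto (d t) (cocompact E3) (nhds e)

/-- joint smoothness in time and space of `(ρ, u, d)`. -/
def SmoothSol (ρ : ℝ → E3 → ℝ) (u d : ℝ → E3 → E3) : Prop :=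
  ContDiff ℝ (⊤ : ℕ∞) (fun p : ℝ × E3 => ρ p.1 p.2) ∧
  ContDiff ℝ (⊤ : ℕ∞) (fun p : ℝ × E3 => u p.1 p.2) ∧
  ContDiff ℝ (⊤ : ℕ∞) (fun p : ℝ × E3 => d p.1 p.2)

/-- the initial data assumptions (3/4)ρ̄ ≤ ρ₀ ≤ (5/4)ρ̄, ρ₀ − ρ̄ ∈ D^{1,2} ∩ D^{1,q},
G(ρ₀) ∈ L¹, u₀ ∈ H², d₀ − e ∈ H³, |d₀| = 1. -/
structure InitData (a γ ρbar q : ℝ) (e : E3) (ρ₀ : E3 → ℝ) (u₀ d₀ : E3 → E3) : Prop where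
  rho_low : ∀ x, 3 / 4 * ρbar ≤ ρ₀ x
  rho_high : ∀ x, ρ₀ x ≤ 5 / 4 * ρbar
  rho_D12 : MemLp (snrm1 fun x => ρ₀ x - ρbar) 2 volume
  rho_D1q : MemLp (snrm1 fun x => ρ₀ x - ρbar) (ENNReal.ofReal q) volume
  G_L1 : Integrable (fun x => Gfun a γ ρbar (ρ₀ x)) volume
  u_L2 : MemLp u₀ 2 volume
  u_D1 : MemLp (nrm1 u₀) 2 volume
  u_D2 : MemLp (nrm2 u₀) 2 volume
  d_L2 : MemLp (fun x => d₀ x - e) 2 volume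
  d_D1 : MemLp (nrm1 fun x => d₀ x - e) 2 volume
  d_D2 : MemLp (nrm2 fun x => d₀ x - e) 2 volume
  d_D3 : MemLp (nrm3 fun x => d₀ x - e) 2 volume
  d_unit : ∀ x, ‖d₀ x‖ = 1

end LC

open LC Set

/-! The mean value theorem bounds `(s - ρ̄) (s^γ - ρ̄^γ)` between `γ A^(γ-1) (s - ρ̄)²` and
`γ B^(γ-1) (s - ρ̄)²` for `s, ρ̄ ∈ [A, B]`, so the integrand `(P(s) - P(ρ̄)) / s²` of `G` lies
between two multiples of `s - ρ̄`, whose integrals from `ρ̄` to `ρ` are multiples of `(ρ - ρ̄)²/2`.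
With `[A, B] = [ρ̄/2, 3ρ̄/2]` every constant is a power of `ρ̄` times a constant depending on
`a` and `γ` only, which produces the factor `ρ̄^(γ-2)`. -/

theorem Convex.mul_sq_le_sub_mul_image_sub_of_le_deriv {D : Set ℝ} (hD : Convex ℝ D)
    {f : ℝ → ℝ} (hf : ContinuousOn f D) (hf' : DifferentiableOn ℝ f (interior D)) {C : ℝ}
    (hC : ∀ x ∈ interior D, C ≤ deriv f x) {x y : ℝ} (hx : x ∈ D) (hy : y ∈ D) :
    C * (x - y) ^ 2 ≤ (x - y) * (f x - f y) := by
  have slope := hD.mul_sub_le_image_sub_of_le_deriv hf hf' hC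
  rcases le_total y x with hyx | hxy
  · nlinarith [slope y hy x hx hyx]
  · nlinarith [slope x hx y hy hxy]

theorem Convex.sub_mul_image_sub_le_mul_sq_of_deriv_le {D : Set ℝ} (hD : Convex ℝ D)
    {f : ℝ → ℝ} (hf : ContinuousOn f D) (hf' : DifferentiableOn ℝ f (interior D)) {C : ℝ}
    (hC : ∀ x ∈ interior D, deriv f x ≤ C) {x y : ℝ} (hx : x ∈ D) (hy : y ∈ D) :
    (x - y) * (f x - f y) ≤ C * (x - y) ^ 2 := by
  have hC' : ∀ x ∈ interior D, -C ≤ deriv (fun y => -f y) x := fun x hx => by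
    rw [deriv.fun_neg, neg_le_neg_iff]
    exact hC x hx
  have := hD.mul_sq_le_sub_mul_image_sub_of_le_deriv (f := fun z => -f z) hf.neg hf'.neg hC'
    hx hy
  linarith [show (x - y) * (-f x - -f y) = -((x - y) * (f x - f y)) by ring]

theorem Real.rpow_sub_rpow_bounds {γ A B x y : ℝ} (hγ : 1 ≤ γ) (hA : 0 < A)
    (hx : x ∈ Icc A B) (hy : y ∈ Icc A B) :
    γ * A ^ (γ - 1) * (x - y) ^ 2 ≤ (x - y) * (x ^ γ - y ^ γ) ∧
      (x - y) * (x ^ γ - y ^ γ) ≤ γ * B ^ (γ - 1) * (x - y) ^ 2 := by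
  have hpos : ∀ z ∈ Icc A B, z ≠ 0 := fun z hz => (hA.trans_le hz.1).ne'
  have hcont : ContinuousOn (fun z : ℝ => z ^ γ) (Icc A B) := fun z hz =>
    (Real.continuousAt_rpow_const z γ (Or.inl (hpos z hz))).continuousWithinAt
  have hdiff : DifferentiableOn ℝ (fun z : ℝ => z ^ γ) (interior (Icc A B)) := fun z hz =>
    (Real.differentiableAt_rpow_const_of_ne γ
      (hpos z (interior_subset hz))).differentiableWithinAt
  constructor
  · refine (convex_Icc A B).mul_sq_le_sub_mul_image_sub_of_le_deriv hcont hdiff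
      (fun z hz => ?_) hx hy
    rw [interior_Icc] at hz
    rw [Real.deriv_rpow_const]
    gcongr
    exact hz.1.le
  · refine (convex_Icc A B).sub_mul_image_sub_le_mul_sq_of_deriv_le hcont hdiff
      (fun z hz => ?_) hx hy
    rw [interior_Icc] at hz
    rw [Real.deriv_rpow_const]
    have : 0 < z := hA.trans hz.1
    gcongr
    exact hz.2.le

-- The hypothesis says that `f s ≥ m (s - c)` to the right of `c` and `f s ≤ m (s - c)` to its
-- left, which is what a lower bound on `∫ s in c..r, f s` needs in either orientation.
theorem intervalIntegral.mul_sq_div_two_le_integral {f : ℝ → ℝ} {c r m : ℝ}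
    (hf : IntervalIntegrable f volume c r)
    (h : ∀ s ∈ uIcc c r, m * (s - c) ^ 2 ≤ (s - c) * f s) :
    m * (r - c) ^ 2 / 2 ≤ ∫ s in c..r, f s := by
  have hlin : ∫ s in c..r, m * (s - c) = m * (r - c) ^ 2 / 2 := by
    simp only [intervalIntegral.integral_const_mul, intervalIntegral.integral_sub,
      intervalIntegral.intervalIntegrable_id, intervalIntegrable_const, integral_id,
      intervalIntegral.integral_const, smul_eq_mul]
    ring
  have hint : ∀ p q : ℝ, IntervalIntegrable (fun s => m * (s - c)) volume p q :=
    fun p q => (by fun_prop : Continuous fun s => m * (s - c)).intervalIntegrable p q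
  rw [← hlin]
  rcases le_total c r with hcr | hrc
  · refine intervalIntegral.integral_mono_on_of_le_Ioo hcr (hint c r) hf fun s hs => ?_
    have := h s (Icc_subset_uIcc (Ioo_subset_Icc_self hs))
    nlinarith [hs.1]
  · rw [intervalIntegral.integral_symm, intervalIntegral.integral_symm r, neg_le_neg_iff]
    refine intervalIntegral.integral_mono_on_of_le_Ioo hrc hf.symm (hint r c) fun s hs => ?_
    have := h s (Icc_subset_uIcc' (Ioo_subset_Icc_self hs))
    nlinarith [hs.2]

theorem intervalIntegral.integral_le_mul_sq_div_two {f : ℝ → ℝ} {c r M : ℝ}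
    (hf : IntervalIntegrable f volume c r)
    (h : ∀ s ∈ uIcc c r, (s - c) * f s ≤ M * (s - c) ^ 2) :
    ∫ s in c..r, f s ≤ M * (r - c) ^ 2 / 2 := by
  have := intervalIntegral.mul_sq_div_two_le_integral (f := fun s => -f s) (m := -M) hf.neg
    fun s hs => by linarith [h s hs, show (s - c) * -f s = -((s - c) * f s) by ring]
  rw [intervalIntegral.integral_neg] at this
  linarith

theorem sub_mul_pressure_integrand_bounds {a γ A B ρbar s : ℝ} (ha : 0 ≤ a) (hγ : 1 ≤ γ)
    (hA : 0 < A) (hρbar : ρbar ∈ Icc A B) (hs : s ∈ Icc A B) :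
    a * γ * A ^ (γ - 1) / B ^ 2 * (s - ρbar) ^ 2
        ≤ (s - ρbar) * ((a * s ^ γ - a * ρbar ^ γ) / s ^ 2) ∧
      (s - ρbar) * ((a * s ^ γ - a * ρbar ^ γ) / s ^ 2)
        ≤ a * γ * B ^ (γ - 1) / A ^ 2 * (s - ρbar) ^ 2 := by
  obtain ⟨hlow, hhigh⟩ := Real.rpow_sub_rpow_bounds hγ hA hs hρbar
  have hs0 : 0 < s := hA.trans_le hs.1
  have hfactor : (s - ρbar) * ((a * s ^ γ - a * ρbar ^ γ) / s ^ 2)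
      = a * ((s - ρbar) * (s ^ γ - ρbar ^ γ)) / s ^ 2 := by ring
  rw [hfactor]
  constructor
  · calc a * γ * A ^ (γ - 1) / B ^ 2 * (s - ρbar) ^ 2
        = a * (γ * A ^ (γ - 1) * (s - ρbar) ^ 2) / B ^ 2 := by ring
      _ ≤ a * (γ * A ^ (γ - 1) * (s - ρbar) ^ 2) / s ^ 2 := by
          gcongr
          exact hs.2
      _ ≤ a * ((s - ρbar) * (s ^ γ - ρbar ^ γ)) / s ^ 2 := by gcongr
  · have : 0 ≤ a * (γ * B ^ (γ - 1) * (s - ρbar) ^ 2) := by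
      have : 0 < B := hs0.trans_le hs.2
      have : 0 ≤ γ := by linarith
      positivity
    calc a * ((s - ρbar) * (s ^ γ - ρbar ^ γ)) / s ^ 2
        ≤ a * (γ * B ^ (γ - 1) * (s - ρbar) ^ 2) / s ^ 2 := by gcongr
      _ ≤ a * (γ * B ^ (γ - 1) * (s - ρbar) ^ 2) / A ^ 2 := by
          gcongr
          exact hs.1
      _ = a * γ * B ^ (γ - 1) / A ^ 2 * (s - ρbar) ^ 2 := by ring

theorem Gfun_bounds {a γ A B ρbar r : ℝ} (ha : 0 ≤ a) (hγ : 1 ≤ γ) (hA : 0 < A)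
    (hρbar : ρbar ∈ Icc A B) (hr : r ∈ Icc A B) :
    a * γ * A ^ γ / (2 * B ^ 2) * (r - ρbar) ^ 2 ≤ Gfun a γ ρbar r ∧
      Gfun a γ ρbar r ≤ a * γ * B ^ γ / (2 * A ^ 2) * (r - ρbar) ^ 2 := by
  have hsub : uIcc ρbar r ⊆ Icc A B := uIcc_subset_Icc hρbar hr
  have hB : 0 < B := hA.trans_le (hρbar.1.trans hρbar.2)
  have hf : IntervalIntegrable (fun s => (a * s ^ γ - a * ρbar ^ γ) / s ^ 2) volume ρbar r := by
    refine ContinuousOn.intervalIntegrable fun s hs => ?_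
    have hs0 : s ≠ 0 := (hA.trans_le (hsub hs).1).ne'
    exact (((Real.continuousAt_rpow_const s γ (Or.inl hs0)).const_mul a).sub
      continuousAt_const).div (continuousAt_pow s 2) (pow_ne_zero 2 hs0) |>.continuousWithinAt
  have hI_low := intervalIntegral.mul_sq_div_two_le_integral hf fun s hs =>
    (sub_mul_pressure_integrand_bounds ha hγ hA hρbar (hsub hs)).1
  have hI_high := intervalIntegral.integral_le_mul_sq_div_two hf fun s hs =>
    (sub_mul_pressure_integrand_bounds ha hγ hA hρbar (hsub hs)).2
  have hm : 0 ≤ a * γ * A ^ (γ - 1) / B ^ 2 * (r - ρbar) ^ 2 / 2 := by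
    have : 0 ≤ γ := by linarith
    positivity
  have hA_pow : A ^ γ = A * A ^ (γ - 1) := by rw [Real.rpow_sub_one hA.ne']; field_simp
  have hB_pow : B ^ γ = B * B ^ (γ - 1) := by rw [Real.rpow_sub_one hB.ne']; field_simp
  constructor
  · calc a * γ * A ^ γ / (2 * B ^ 2) * (r - ρbar) ^ 2
        = A * (a * γ * A ^ (γ - 1) / B ^ 2 * (r - ρbar) ^ 2 / 2) := by rw [hA_pow]; ring
      _ ≤ Gfun a γ ρbar r := mul_le_mul hr.1 hI_low hm (hA.le.trans hr.1)
  · calc Gfun a γ ρbar r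
        ≤ B * (a * γ * B ^ (γ - 1) / A ^ 2 * (r - ρbar) ^ 2 / 2) :=
          mul_le_mul hr.2 hI_high (hm.trans hI_low) hB.le
      _ = a * γ * B ^ γ / (2 * A ^ 2) * (r - ρbar) ^ 2 := by rw [hB_pow]; ring

/-- Equivalence of the relative potential energy with the quadratic
distance: for `a > 0`, `γ > 1`, there exist `c, C > 0` depending only on `a` and `γ` such
that for every `ρ̄ > 0` and every `ρ ∈ [ρ̄/2, 3ρ̄/2]`,
`c ρ̄^{γ−2}(ρ−ρ̄)² ≤ G(ρ) ≤ C ρ̄^{γ−2}(ρ−ρ̄)²`. -/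
theorem G_equivalence (a γ : ℝ) (ha : 0 < a) (hγ : 1 < γ) :
    ∃ c > (0:ℝ), ∃ C > (0:ℝ), ∀ ρbar > (0:ℝ), ∀ r : ℝ, ρbar / 2 ≤ r → r ≤ 3 * ρbar / 2 →
      c * ρbar ^ (γ - 2) * (r - ρbar) ^ 2 ≤ Gfun a γ ρbar r ∧
      Gfun a γ ρbar r ≤ C * ρbar ^ (γ - 2) * (r - ρbar) ^ 2 := by
  refine ⟨2 * a * γ / (9 * 2 ^ γ), by positivity, 2 * a * γ * 3 ^ γ / 2 ^ γ, by positivity,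
    fun ρbar hρbar r hr₁ hr₂ => ?_⟩
  have hlow : 2 * a * γ / (9 * 2 ^ γ) * ρbar ^ (γ - 2)
      = a * γ * (ρbar / 2) ^ γ / (2 * (3 * ρbar / 2) ^ 2) := by
    rw [Real.div_rpow hρbar.le zero_le_two, Real.rpow_sub hρbar, Real.rpow_two]
    field_simp
    norm_num
  have hhigh : 2 * a * γ * 3 ^ γ / 2 ^ γ * ρbar ^ (γ - 2)
      = a * γ * (3 * ρbar / 2) ^ γ / (2 * (ρbar / 2) ^ 2) := by
    rw [Real.div_rpow (by positivity) zero_le_two, Real.mul_rpow zero_le_three hρbar.le,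
      Real.rpow_sub hρbar, Real.rpow_two]
    field_simp
  rw [hlow, hhigh]
  exact Gfun_bounds ha.le hγ.le (by positivity) ⟨by linarith, by linarith⟩ ⟨hr₁, hr₂⟩
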